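/- Let G be a graph on n vertices with minimum degree at least 2, and let Γ₀ ⊆ G be a spanning subgraph of minimum degree at least 2 such that: (i) the set SMALL of vertices of Γ₀-degree < d₀ has size at most n^{0.3}; (ii) no two (possibly equal) vertices of SMALL are joined in G by a nonempty path of length at most 4; (iii) every U with |U| ≤ n/√(ln n) spans at most |U|·(ln n)^{3/4} edges of Γ₀; (iv) for all disjoint U, W with |U| ≤ n/√(ln n) and |W| ≤ |U|·(ln n)^{1/4}, the number of Γ₀-edges between U and W is at most d₀|U|/2; (v) every vertex outside SMALL has Γ₀-degree at least d₀; (vi) for every pair of disjoint sets U, W of size ⌈n/√(ln n)⌉, Γ₀ has at least one edge between U and W. Then Γ₀ is an (n/4, 2)-expander, i.e., |N_{Γ₀}(S)| ≥ 2|S| for every S with |S| ≤ n/4. (Here d₀ = ⌊δ₀ ln n⌋ for a small constant δ₀ > 0, and n is sufficiently large.) -/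

import Mathlib

open scoped Classical

/-- External neighborhood of a vertex set `S` in a graph `G`. -/
noncomputable def extNbhd {V : Type*} [Fintype V] [DecidableEq V]
    (G : SimpleGraph V) (S : Finset V) : Finset V :=
  Finset.univ.filter (fun v => v ∉ S ∧ ∃ u ∈ S, G.Adj u v)

/-- Number of edges of `G` spanned by the vertex set `U`. -/
noncomputable def edgesWithin {V : Type*} [Fintype V] [DecidableEq V]
    (G : SimpleGraph V) (U : Finset V) : ℕ :=
  (G.edgeFinset.filter (fun e => ∀ x ∈ e, x ∈ U)).card

/-- Number of edges of `G` with one endpoint in `U` and the other in `W`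
(for disjoint `U`, `W`). -/
noncomputable def edgesBetween {V : Type*} [Fintype V] [DecidableEq V]
    (G : SimpleGraph V) (U W : Finset V) : ℕ :=
  ((U ×ˢ W).filter (fun p => G.Adj p.1 p.2)).card

/-!
Split `S` into its part `B` inside SMALL and the rest `T`. Vertices of SMALL are far apart
in `Γ₀`, so the neighbourhoods of the vertices of `B` are disjoint and avoid SMALL: they give
`2|B|` neighbours, at most `|T|` of which lie in `S`. Moreover each vertex of `T` has at most one
neighbour within distance one of SMALL, so counting the `≥ d₀` edges at each vertex of `T`
against (iii) and (iv) shows that `T` has at least `3|T|` further neighbours. Sets too large for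
(iii) and (iv) are handled by (vi): a set `S` with `|N(S)| < 2|S|` leaves at least `|S|` vertices
outside `S ∪ N(S)`.
-/

open Finset SimpleGraph

variable {V : Type*} {H : SimpleGraph V}

def FarApart (G : SimpleGraph V) (A : Finset V) (k : ℕ) : Prop :=
  (∀ u ∈ A, ∀ v ∈ A, ∀ w : G.Walk u v, w.IsPath → 1 ≤ w.length → k < w.length) ∧
    ∀ u ∈ A, ∀ c : G.Walk u u, c.IsCycle → k < c.length

namespace FarApart

variable {A : Finset V} {k : ℕ} {u v w x y z : V}

theorem of_le {G : SimpleGraph V} (hHG : H ≤ G) (hA : FarApart G A k) : FarApart H A k :=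
  ⟨fun u hu v hv p hp hp1 => by
      simpa using hA.1 u hu v hv (p.mapLe hHG) (hp.mapLe hHG) (by simpa using hp1),
    fun u hu c hc => by simpa using hA.2 u hu (c.mapLe hHG) (hc.mapLe hHG)⟩

theorem not_adj (hA : FarApart H A k) (hk : 1 ≤ k) (hu : u ∈ A) (hv : v ∈ A) : ¬ H.Adj u v :=
  fun h => by
    have := hA.1 u hu v hv (.cons h .nil) (by simp [h.ne]) (by simp)
    simp at this; omega

theorem eq_of_adj_of_adj (hA : FarApart H A k) (hk : 2 ≤ k) (hu : u ∈ A) (hv : v ∈ A)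
    (huw : H.Adj u w) (hvw : H.Adj v w) : u = v := by
  by_contra huv
  have := hA.1 u hu v hv (.cons huw (.cons hvw.symm .nil))
    (by simp [huw.ne, hvw.ne', huv]) (by simp)
  simp at this; omega

theorem not_adj_adj_adj (hA : FarApart H A k) (hk : 3 ≤ k) (hu : u ∈ A) (hv : v ∈ A)
    (huy : H.Adj u y) (hyx : H.Adj y x) (hxv : H.Adj x v) : False := by
  have hy : y ∉ A := fun hy => hA.not_adj (by omega) hu hy huy
  have hx : x ∉ A := fun hx => hA.not_adj (by omega) hx hv hxv
  have hux : u ≠ x := fun h => hx (h ▸ hu)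
  have hyv : y ≠ v := fun h => hy (h ▸ hv)
  by_cases huv : u = v
  · subst huv
    have := hA.2 u hu (.cons huy (.cons hyx (.cons hxv .nil)))
      (by simp [Walk.cons_isCycle_iff, hyx.ne, hxv.ne, huy.ne, hux, hyv])
    simp at this; omega
  · have := hA.1 u hu v hv (.cons huy (.cons hyx (.cons hxv .nil)))
      (by simp [huy.ne, hyx.ne, hxv.ne, hux, hyv, huv]) (by simp)
    simp at this; omega

theorem not_adj_adj_adj_adj (hA : FarApart H A k) (hk : 4 ≤ k) (hu : u ∈ A) (hv : v ∈ A)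
    (hx : x ∉ A) (hyz : y ≠ z) (huy : H.Adj u y) (hyx : H.Adj y x) (hxz : H.Adj x z)
    (hzv : H.Adj z v) : False := by
  have hy : y ∉ A := fun hy => hA.not_adj (by omega) hu hy huy
  have hz : z ∉ A := fun hz => hA.not_adj (by omega) hz hv hzv
  have hux : u ≠ x := fun h => hx (h ▸ hu)
  have huz : u ≠ z := fun h => hz (h ▸ hu)
  have hyv : y ≠ v := fun h => hy (h ▸ hv)
  have hxv : x ≠ v := fun h => hx (h ▸ hv)
  by_cases huv : u = v
  · subst huv
    have := hA.2 u hu (.cons huy (.cons hyx (.cons hxz (.cons hzv .nil))))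
      (by simp [Walk.cons_isCycle_iff, huy.ne, hyx.ne, hxz.ne, hzv.ne, hux, huz, hyz, hxv, hyv])
    simp at this; omega
  · have := hA.1 u hu v hv (.cons huy (.cons hyx (.cons hxz (.cons hzv .nil))))
      (by simp [huy.ne, hyx.ne, hxz.ne, hzv.ne, hux, huz, hyv, hxv, huv, hyz]) (by simp)
    simp at this; omega

end FarApart

section Counting

variable [Fintype V] [DecidableEq V]

@[simp]
theorem mem_extNbhd {S : Finset V} {v : V} :
    v ∈ extNbhd H S ↔ v ∉ S ∧ ∃ u ∈ S, H.Adj u v := by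
  simp [extNbhd]

theorem edgesBetween_eq_sum (U W : Finset V) :
    edgesBetween H U W = ∑ x ∈ U, #(W ∩ H.neighborFinset x) := by
  rw [edgesBetween, card_filter, sum_product]
  refine sum_congr rfl fun x _ => ?_
  rw [← card_filter]
  congr 1
  ext y
  simp

theorem edgesBetween_self (U : Finset V) : edgesBetween H U U = 2 * edgesWithin H U := by
  have hdarts : edgesBetween H U U = #{d : H.Dart | d.fst ∈ U ∧ d.snd ∈ U} :=
    card_bij' (fun p hp => ⟨p, (mem_filter.1 hp).2⟩) (fun d _ => d.toProd)
      (fun p hp => by simpa using (mem_filter.1 hp).1)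
      (fun d hd => by simpa [d.adj] using hd) (fun _ _ => rfl) (fun _ _ => rfl)
  rw [hdarts, edgesWithin, card_eq_sum_card_fiberwise (f := Dart.edge)]
  · rw [sum_const_nat (m := 2), mul_comm]
    intro e he
    rw [← H.dart_edge_fiber_card e (mem_edgeFinset.1 (mem_filter.1 he).1)]
    congr 1
    ext d
    simp only [mem_filter, mem_univ, true_and, and_iff_right_iff_imp]
    rintro rfl
    have hdU := (mem_filter.1 he).2
    exact ⟨hdU _ (Sym2.mem_mk_left _ _), hdU _ (Sym2.mem_mk_right _ _)⟩
  · intro d hd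
    simp only [coe_filter, mem_univ, true_and, Set.mem_ofPred_eq] at hd
    simp only [coe_filter, Set.mem_ofPred_eq, mem_edgeFinset, d.edge_mem, true_and]
    intro x hx
    rcases Sym2.mem_iff.1 hx with rfl | rfl
    exacts [hd.1, hd.2]

theorem neighborFinset_subset_union_extNbhd_sdiff {T : Finset V} (C : Finset V) {x : V}
    (hx : x ∈ T) : H.neighborFinset x ⊆ T ∪ C ∪ (extNbhd H T \ (T ∪ C)) := by
  intro y hy
  by_cases hyTC : y ∈ T ∪ C
  · exact mem_union_left _ hyTC
  · refine mem_union_right _ (mem_sdiff.2 ⟨mem_extNbhd.2 ⟨?_, x, hx, ?_⟩, hyTC⟩)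
    · exact fun hyT => hyTC (mem_union_left _ hyT)
    · exact (mem_neighborFinset _ _ _).1 hy

theorem sum_degree_le_of_card_inter_neighborFinset_le_one (T C : Finset V)
    (hC : ∀ x ∈ T, #(C ∩ H.neighborFinset x) ≤ 1) :
    ∑ x ∈ T, H.degree x ≤
      2 * edgesWithin H T + #T + edgesBetween H T (extNbhd H T \ (T ∪ C)) := by
  set W := extNbhd H T \ (T ∪ C)
  have hx : ∀ x ∈ T, H.degree x ≤
      #(T ∩ H.neighborFinset x) + 1 + #(W ∩ H.neighborFinset x) := by
    intro x hx
    have hCx := hC x hx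
    set N := H.neighborFinset x
    have hN : N = T ∩ N ∪ C ∩ N ∪ W ∩ N := by
      rw [← union_inter_distrib_right, ← union_inter_distrib_right,
        inter_eq_right.2 (neighborFinset_subset_union_extNbhd_sdiff C hx)]
    have := card_union_le (T ∩ N ∪ C ∩ N) (W ∩ N)
    have := card_union_le (T ∩ N) (C ∩ N)
    have hdeg : H.degree x = #(T ∩ N ∪ C ∩ N ∪ W ∩ N) := by
      rw [← hN, card_neighborFinset_eq_degree]
    omega
  calc ∑ x ∈ T, H.degree x
      ≤ ∑ x ∈ T, (#(T ∩ H.neighborFinset x) + 1 + #(W ∩ H.neighborFinset x)) :=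
        sum_le_sum hx
    _ = _ := by
      rw [sum_add_distrib, sum_add_distrib, ← edgesBetween_eq_sum, ← edgesBetween_eq_sum,
        edgesBetween_self, sum_const, smul_eq_mul, mul_one]

theorem two_mul_card_le_card_extNbhd_of_le_card {m : ℕ}
    (hedge : ∀ U W : Finset V, Disjoint U W → #U = m → #W = m →
      ∃ u ∈ U, ∃ w ∈ W, H.Adj u w)
    {S : Finset V} (hm : m ≤ #S) (hS : 4 * #S ≤ Fintype.card V) :
    2 * #S ≤ #(extNbhd H S) := by
  by_contra! hN
  have hR : m ≤ #(univ \ (S ∪ extNbhd H S)) := by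
    have := card_union_le S (extNbhd H S)
    rw [card_univ_sdiff]
    omega
  obtain ⟨U, hUS, hU⟩ := exists_subset_card_eq hm
  obtain ⟨W, hWR, hW⟩ := exists_subset_card_eq hR
  have hUW : Disjoint U W :=
    disjoint_of_subset_left hUS (disjoint_of_subset_right hWR
      (disjoint_of_subset_right (sdiff_subset_sdiff le_rfl subset_union_left) disjoint_sdiff))
  obtain ⟨u, hu, w, hw, huw⟩ := hedge U W hUW hU hW
  have hwR := hWR hw
  simp only [mem_sdiff, mem_univ, mem_union, mem_extNbhd, true_and, not_or, not_and,
    not_exists] at hwR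
  exact hwR.2 hwR.1 u (hUS hu) huw

theorem three_mul_card_le_card_extNbhd_sdiff {T C : Finset V} {d : ℕ} {a : ℝ}
    (hd : 4 * a + 2 < d) (hdeg : ∀ x ∈ T, d ≤ H.degree x)
    (hC : ∀ x ∈ T, #(C ∩ H.neighborFinset x) ≤ 1)
    (hwithin : (edgesWithin H T : ℝ) ≤ #T * a)
    (hbetween : ∀ W, Disjoint T W → #W ≤ 3 * #T →
      2 * (edgesBetween H T W : ℝ) ≤ d * #T) :
    3 * #T ≤ #(extNbhd H T \ (T ∪ C)) := by
  set W := extNbhd H T \ (T ∪ C)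
  have hsum : d * #T ≤ 2 * edgesWithin H T + #T + edgesBetween H T W :=
    calc d * #T = ∑ _x ∈ T, d := by rw [sum_const, smul_eq_mul, mul_comm]
      _ ≤ ∑ x ∈ T, H.degree x := sum_le_sum hdeg
      _ ≤ _ := sum_degree_le_of_card_inter_neighborFinset_le_one T C hC
  by_contra! hlt
  have hTW : Disjoint T W := disjoint_left.2 fun y hyT hyW =>
    (mem_sdiff.1 hyW).2 (mem_union_left _ hyT)
  have hWT := hbetween W hTW hlt.le
  have hT : (0 : ℝ) < #T := by
    have : 0 < #T := by omega
    exact_mod_cast this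
  have hsumR : (d : ℝ) * #T ≤ 2 * edgesWithin H T + #T + edgesBetween H T W := by
    exact_mod_cast hsum
  nlinarith

end Counting

namespace FarApart

variable [Fintype V] [DecidableEq V] {A : Finset V} {k : ℕ}

theorem card_inter_neighborFinset_le_one (hA : FarApart H A k) (hk : 4 ≤ k) {x : V}
    (hx : x ∉ A) :
    #((A ∪ A.biUnion fun v => H.neighborFinset v) ∩ H.neighborFinset x) ≤ 1 := by
  refine card_le_one.2 fun a ha b hb => ?_
  simp only [mem_inter, mem_union, mem_biUnion, mem_neighborFinset] at ha hb
  obtain ⟨haA | ⟨v, hv, hva⟩, hxa⟩ := ha <;> obtain ⟨hbA | ⟨w, hw, hwb⟩, hxb⟩ := hb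
  · exact hA.eq_of_adj_of_adj (by omega) haA hbA hxa.symm hxb.symm
  · exact (hA.not_adj_adj_adj (by omega) haA hw hxa.symm hxb hwb.symm).elim
  · exact (hA.not_adj_adj_adj (by omega) hbA hv hxb.symm hxa hva.symm).elim
  · by_contra hab
    exact hA.not_adj_adj_adj_adj hk hv hw hx hab hva hxa.symm hxb hwb.symm

theorem mul_card_le_card_biUnion_neighborFinset (hA : FarApart H A k) (hk : 2 ≤ k)
    {B : Finset V} (hB : B ⊆ A) {r : ℕ} (hdeg : ∀ v ∈ B, r ≤ H.degree v) :
    r * #B ≤ #(B.biUnion fun v => H.neighborFinset v) := by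
  rw [card_biUnion]
  · calc r * #B = ∑ _v ∈ B, r := by rw [sum_const, smul_eq_mul, mul_comm]
      _ ≤ ∑ v ∈ B, #(H.neighborFinset v) :=
          sum_le_sum fun v hv => (card_neighborFinset_eq_degree H v).symm ▸ hdeg v hv
  · intro v hv w hw hvw
    refine disjoint_left.2 fun y hyv hyw => hvw ?_
    rw [mem_neighborFinset] at hyv hyw
    exact hA.eq_of_adj_of_adj hk (hB hv) (hB hw) hyv hyw

theorem two_mul_card_le_card_extNbhd (hA : FarApart H A 4) (hdegA : ∀ v ∈ A, 2 ≤ H.degree v)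
    {d : ℕ} (hdeg : ∀ v ∉ A, d ≤ H.degree v) {a : ℝ} (hd : 4 * a + 2 < d) {S : Finset V}
    (hwithin : (edgesWithin H (S \ A) : ℝ) ≤ #(S \ A) * a)
    (hbetween : ∀ W, Disjoint (S \ A) W → #W ≤ 3 * #(S \ A) →
      2 * (edgesBetween H (S \ A) W : ℝ) ≤ d * #(S \ A)) :
    2 * #S ≤ #(extNbhd H S) := by
  set T := S \ A
  set B := S ∩ A
  set K := B.biUnion fun v => H.neighborFinset v
  set W := extNbhd H T \ (T ∪ (B ∪ K))
  have hK : 2 * #B ≤ #K := hA.mul_card_le_card_biUnion_neighborFinset (by norm_num)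
    inter_subset_right fun v hv => hdegA v (mem_inter.1 hv).2
  have hKS : #(K ∩ S) ≤ #T := by
    refine card_le_card fun y hy => ?_
    simp only [K, B, mem_inter, mem_biUnion, mem_neighborFinset] at hy
    obtain ⟨⟨v, ⟨-, hvA⟩, hvy⟩, hyS⟩ := hy
    exact mem_sdiff.2 ⟨hyS, fun hyA => hA.not_adj (by norm_num) hvA hyA hvy⟩
  have hW : 3 * #T ≤ #W := three_mul_card_le_card_extNbhd_sdiff hd
    (fun x hx => hdeg x (mem_sdiff.1 hx).2)
    (fun x hx => (card_le_card (inter_subset_inter_right (union_subset_union inter_subset_right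
      (biUnion_subset_biUnion_of_subset_left _ inter_subset_right)))).trans
      (hA.card_inter_neighborFinset_le_one le_rfl (mem_sdiff.1 hx).2))
    hwithin hbetween
  have hsub : K \ S ∪ W ⊆ extNbhd H S := by
    have hWeq : W = extNbhd H T \ (S ∪ K) := by
      simp only [W, T, B, ← union_assoc, sdiff_union_inter]
    rw [hWeq]
    refine union_subset (fun y hy => ?_) fun y hy => ?_
    · obtain ⟨hyK, hyS⟩ := mem_sdiff.1 hy
      obtain ⟨v, hv, hvy⟩ := mem_biUnion.1 hyK
      exact mem_extNbhd.2 ⟨hyS, v, (mem_inter.1 hv).1, (mem_neighborFinset _ _ _).1 hvy⟩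
    · obtain ⟨hyN, hySK⟩ := mem_sdiff.1 hy
      obtain ⟨-, u, hu, huy⟩ := mem_extNbhd.1 hyN
      exact mem_extNbhd.2 ⟨fun hyS => hySK (mem_union_left _ hyS), u, (mem_sdiff.1 hu).1, huy⟩
  have hdisj : Disjoint (K \ S) W := disjoint_left.2 fun y hyK hyW =>
    (mem_sdiff.1 hyW).2 (mem_union_right _ (mem_union_right _ (mem_sdiff.1 hyK).1))
  have hN := card_le_card hsub
  rw [card_union_of_disjoint hdisj] at hN
  have hKsplit : #(K ∩ S) + #(K \ S) = #K := card_inter_add_card_sdiff K S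
  have hSsplit : #B + #T = #S := card_inter_add_card_sdiff S A
  omega

end FarApart

theorem ten_le_rpow_one_div_four {L : ℝ} (hL : 10000 ≤ L) : 10 ≤ L ^ ((1 : ℝ) / 4) :=
  calc (10 : ℝ) = (10 ^ (4 : ℝ)) ^ ((1 : ℝ) / 4) := by
        rw [← Real.rpow_mul (by norm_num)]; norm_num
    _ ≤ L ^ ((1 : ℝ) / 4) :=
        Real.rpow_le_rpow (by positivity) (by norm_num; linarith) (by norm_num)

theorem four_mul_rpow_three_div_four_add_two_lt_floor {L : ℝ} (hL : 10000 ≤ L) :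
    4 * L ^ ((3 : ℝ) / 4) + 2 < ⌊L⌋₊ := by
  have hsplit : L ^ ((1 : ℝ) / 4) * L ^ ((3 : ℝ) / 4) = L := by
    rw [← Real.rpow_add (by linarith)]; norm_num
  have := ten_le_rpow_one_div_four hL
  have := Real.rpow_nonneg (show (0 : ℝ) ≤ L by linarith) ((3 : ℝ) / 4)
  have := Nat.sub_one_lt_floor L
  nlinarith

theorem stmt_18 :
    ∃ δ₀ : ℝ, 0 < δ₀ ∧ ∃ n₀ : ℕ, ∀ n : ℕ, n₀ ≤ n →
    ∀ G Γ₀ : SimpleGraph (Fin n), Γ₀ ≤ G →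
    (∀ v, 2 ≤ G.degree v) → (∀ v, 2 ≤ Γ₀.degree v) →
    -- d₀ and SMALL
    ∀ d₀ : ℕ, d₀ = ⌊δ₀ * Real.log n⌋₊ →
    ∀ SMALL : Finset (Fin n), SMALL = Finset.univ.filter (fun v => Γ₀.degree v < d₀) →
    -- (i) SMALL is small
    ((SMALL.card : ℝ) ≤ (n : ℝ) ^ (0.3 : ℝ)) →
    -- (ii) no nonempty path (or cycle, for coinciding endpoints) of length at most 4
    -- in G between two vertices of SMALL
    (∀ u v : Fin n, u ∈ SMALL → v ∈ SMALL → ∀ w : G.Walk u v,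
      w.IsPath → 1 ≤ w.length → ¬ w.length ≤ 4) →
    (∀ u : Fin n, u ∈ SMALL → ∀ c : G.Walk u u, c.IsCycle → ¬ c.length ≤ 4) →
    -- (iii) small sets span few Γ₀-edges
    (∀ U : Finset (Fin n), (U.card : ℝ) ≤ (n : ℝ) / Real.sqrt (Real.log n) →
      ((edgesWithin Γ₀ U : ℝ) ≤ (U.card : ℝ) * (Real.log n) ^ ((3 : ℝ) / 4))) →
    -- (iv) few Γ₀-edges between a small set and a not-much-larger set
    (∀ U W : Finset (Fin n), Disjoint U W →
      (U.card : ℝ) ≤ (n : ℝ) / Real.sqrt (Real.log n) →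
      (W.card : ℝ) ≤ (U.card : ℝ) * (Real.log n) ^ ((1 : ℝ) / 4) →
      2 * (edgesBetween Γ₀ U W : ℝ) ≤ (d₀ : ℝ) * U.card) →
    -- (v) vertices outside SMALL have Γ₀-degree at least d₀
    (∀ v : Fin n, v ∉ SMALL → d₀ ≤ Γ₀.degree v) →
    -- (vi) Γ₀ has an edge between any two disjoint sets of size ⌈n/√(ln n)⌉
    (∀ U W : Finset (Fin n), Disjoint U W →
      U.card = ⌈(n : ℝ) / Real.sqrt (Real.log n)⌉₊ →
      W.card = ⌈(n : ℝ) / Real.sqrt (Real.log n)⌉₊ →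
      ∃ u ∈ U, ∃ w ∈ W, Γ₀.Adj u w) →
    -- conclusion: Γ₀ is an (n/4, 2)-expander
    ∀ S : Finset (Fin n), 4 * S.card ≤ n → 2 * S.card ≤ (extNbhd Γ₀ S).card := by
  -- `δ₀ = 1` works: once `ln n ≥ 10⁴`, `⌊ln n⌋ > 4 (ln n)^{3/4} + 2`.
  refine ⟨1, one_pos, ⌈Real.exp 10000⌉₊, ?_⟩
  intro n hn G Γ₀ hle _ hdeg2 d₀ hd₀ SMALL _ _ hpath hcyc hwithin hbetween hdeg hedge S hS
  have hn' : Real.exp 10000 ≤ n := (Nat.le_ceil _).trans (by exact_mod_cast hn)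
  have hL : 10000 ≤ Real.log n := (Real.le_log_iff_exp_le ((Real.exp_pos _).trans_le hn')).2 hn'
  by_cases hlarge : ⌈(n : ℝ) / Real.sqrt (Real.log n)⌉₊ ≤ S.card
  · exact two_mul_card_le_card_extNbhd_of_le_card hedge hlarge (by simpa using hS)
  have hA : FarApart Γ₀ SMALL 4 := FarApart.of_le hle
    ⟨fun u hu v hv w hw h1 => not_le.1 (hpath u v hu hv w hw h1),
      fun u hu c hc => not_le.1 (hcyc u hu c hc)⟩
  have hT : ((S \ SMALL).card : ℝ) ≤ n / Real.sqrt (Real.log n) :=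
    (Nat.cast_le.2 (card_le_card sdiff_subset)).trans (Nat.lt_ceil.1 (not_le.1 hlarge)).le
  refine hA.two_mul_card_le_card_extNbhd (fun v _ => hdeg2 v) hdeg
    (by rw [hd₀, one_mul]; exact four_mul_rpow_three_div_four_add_two_lt_floor hL)
    (hwithin _ hT) fun W hTW hW => hbetween _ W hTW hT ?_
  have := ten_le_rpow_one_div_four hL
  calc (W.card : ℝ) ≤ 3 * (S \ SMALL).card := by exact_mod_cast hW
    _ ≤ (S \ SMALL).card * Real.log n ^ ((1 : ℝ) / 4) := by
        nlinarith [(S \ SMALL).card.cast_nonneg (α := ℝ)]
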